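/- Let a₁, a₂ > 0 and τ ∈ ℝ. Let μ = (μ(1), μ(2)) be a two-armed instance with τ < μ₂(1) < μ₂(2) (so the instance is infeasible and arm 1 is optimal). Then the infimum of D(μ′, μ) over all alternative instances μ′ with a unique optimal arm whose correct output (optimal arm, feasibility flag) differs from that of μ equals min{ a₂(μ₂(2) − μ₂(1))²/4, a₂(μ₂(1) − τ)² }. -/

import Mathlib

/-- The divergence between two-armed instances `μ'` and `μ`:
`D(μ', μ) = max_{j∈{0,1}} [a₁(μ₁(j) − μ'₁(j))² + a₂(μ₂(j) − μ'₂(j))²]`. -/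
noncomputable def InstDiv (a₁ a₂ : ℝ) (μ' μ : Fin 2 → ℝ × ℝ) : ℝ :=
  max (a₁ * ((μ 0).1 - (μ' 0).1) ^ 2 + a₂ * ((μ 0).2 - (μ' 0).2) ^ 2)
      (a₁ * ((μ 1).1 - (μ' 1).1) ^ 2 + a₂ * ((μ 1).2 - (μ' 1).2) ^ 2)

/-- The instance is feasible: some arm satisfies the constraint. -/
def InstFeasible (τ : ℝ) (μ : Fin 2 → ℝ × ℝ) : Prop := ∃ i, (μ i).2 ≤ τ

/-- Arm `j` is the (unique) optimal arm of the two-armed instance `μ` with threshold `τ`: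
in a feasible instance it is the feasible arm with strictly smaller objective value among
feasible arms; in an infeasible instance it is the arm with strictly smaller constraint value. -/
def IsOptArm (τ : ℝ) (μ : Fin 2 → ℝ × ℝ) (j : Fin 2) : Prop :=
  (InstFeasible τ μ ∧ (μ j).2 ≤ τ ∧ ∀ i, i ≠ j → (μ i).2 ≤ τ → (μ j).1 < (μ i).1)
  ∨ (¬ InstFeasible τ μ ∧ ∀ i, i ≠ j → (μ j).2 < (μ i).2)

/-- `μ'` is an alternative instance to `μ`: it has a (unique) optimal arm and its correct
output — the pair (optimal arm, feasibility flag) — differs from that of `μ`. -/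
def AltInstance (τ : ℝ) (μ' μ : Fin 2 → ℝ × ℝ) : Prop :=
  ∃ j' j : Fin 2, IsOptArm τ μ' j' ∧ IsOptArm τ μ j ∧
    (j' ≠ j ∨ ¬ (InstFeasible τ μ' ↔ InstFeasible τ μ))

/-!
Deciding for `μ` amounts to ruling out two kinds of alternatives. A feasible alternative must
push some constraint value down to `τ`; since both are at least `μ₂(1)`, that costs
`a₂(μ₂(1) − τ)²`, attained by moving arm 1 alone. An infeasible alternative must make arm 2
optimal, i.e. reverse the order of the constraint values, and one of them then moves by at least
half the gap `μ₂(2) − μ₂(1)`. Meeting at the midpoint costs exactly `a₂(μ₂(2) − μ₂(1))²/4`, but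
ties leave no unique optimal arm, so this value is only approached, by breaking the tie by `δ → 0⁺`.
-/

open Filter Topology

lemma csInf_le_of_tendsto {α : Type*} {S : Set ℝ} {l : Filter α} [l.NeBot] {f : α → ℝ} {x : ℝ}
    (hS : BddBelow S) (hf : Tendsto f l (𝓝 x)) (hmem : ∀ᶠ y in l, f y ∈ S) : sInf S ≤ x :=
  ge_of_tendsto hf (hmem.mono fun _ hy => csInf_le hS hy)

lemma sq_sub_div_four_le_max_sq_sub {x y x' y' : ℝ} (hxy : x ≤ y) (hyx' : y' ≤ x') :
    (y - x) ^ 2 / 4 ≤ max ((x - x') ^ 2) ((y - y') ^ 2) := by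
  rcases le_or_gt ((x + y) / 2) x' with hx' | hx'
  · exact le_max_of_le_left (by nlinarith)
  · exact le_max_of_le_right (by nlinarith)

section TwoArm

variable {a₁ a₂ τ : ℝ} {μ μ' : Fin 2 → ℝ × ℝ}

lemma not_instFeasible_iff : ¬ InstFeasible τ μ ↔ ∀ i, τ < (μ i).2 := by
  simp [InstFeasible]

lemma not_instFeasible_of_lt (hf0 : τ < (μ 0).2) (hf1 : (μ 0).2 < (μ 1).2) :
    ¬ InstFeasible τ μ :=
  not_instFeasible_iff.2 (Fin.forall_fin_two.2 ⟨hf0, hf0.trans hf1⟩)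

lemma isOptArm_zero_of_lt (hf0 : τ < (μ 0).2) (hf1 : (μ 0).2 < (μ 1).2) : IsOptArm τ μ 0 :=
  Or.inr ⟨not_instFeasible_of_lt hf0 hf1, by simp [Fin.forall_fin_two, hf1]⟩

lemma IsOptArm.lt_of_not_instFeasible {j : Fin 2} (hj : IsOptArm τ μ j)
    (hμ : ¬ InstFeasible τ μ) : ∀ i, i ≠ j → (μ j).2 < (μ i).2 := by
  rcases hj with ⟨hfeas, -⟩ | ⟨-, hlt⟩
  exacts [absurd hfeas hμ, hlt]

lemma IsOptArm.unique {j k : Fin 2} (hj : IsOptArm τ μ j) (hk : IsOptArm τ μ k) : j = k := by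
  by_contra hne
  rcases hj with ⟨_, hjτ, hj⟩ | ⟨hμ, hj⟩ <;> rcases hk with ⟨hfeas, hkτ, hk⟩ | ⟨hμ', hk⟩
  · exact (hj k (Ne.symm hne) hkτ).asymm (hk j hne hjτ)
  · exact hμ' ⟨j, hjτ⟩
  · exact hμ hfeas
  · exact (hj k (Ne.symm hne)).asymm (hk j hne)

lemma instDiv_nonneg (ha₁ : 0 ≤ a₁) (ha₂ : 0 ≤ a₂) : 0 ≤ InstDiv a₁ a₂ μ' μ :=
  le_max_of_le_left (by positivity)

lemma mul_sq_snd_sub_le_instDiv (ha₁ : 0 ≤ a₁) (i : Fin 2) :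
    a₂ * ((μ i).2 - (μ' i).2) ^ 2 ≤ InstDiv a₁ a₂ μ' μ := by
  fin_cases i
  · exact le_max_of_le_left (le_add_of_nonneg_left (by positivity))
  · exact le_max_of_le_right (le_add_of_nonneg_left (by positivity))

lemma mul_sq_le_instDiv_of_instFeasible (ha₁ : 0 ≤ a₁) (ha₂ : 0 ≤ a₂) {c : ℝ} (hτc : τ ≤ c)
    (hcμ : ∀ i, c ≤ (μ i).2) (hμ' : InstFeasible τ μ') :
    a₂ * (c - τ) ^ 2 ≤ InstDiv a₁ a₂ μ' μ := by
  obtain ⟨i, hi⟩ := hμ'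
  calc a₂ * (c - τ) ^ 2 ≤ a₂ * ((μ i).2 - (μ' i).2) ^ 2 := by
        gcongr; linarith [hcμ i]
    _ ≤ InstDiv a₁ a₂ μ' μ := mul_sq_snd_sub_le_instDiv ha₁ i

lemma mul_sq_sub_div_four_le_instDiv (ha₁ : 0 ≤ a₁) (ha₂ : 0 ≤ a₂) (hμ : (μ 0).2 ≤ (μ 1).2)
    (hμ' : (μ' 1).2 ≤ (μ' 0).2) :
    a₂ * ((μ 1).2 - (μ 0).2) ^ 2 / 4 ≤ InstDiv a₁ a₂ μ' μ := by
  calc a₂ * ((μ 1).2 - (μ 0).2) ^ 2 / 4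
      = a₂ * (((μ 1).2 - (μ 0).2) ^ 2 / 4) := by ring
    _ ≤ a₂ * max (((μ 0).2 - (μ' 0).2) ^ 2) (((μ 1).2 - (μ' 1).2) ^ 2) := by
        gcongr; exact sq_sub_div_four_le_max_sq_sub hμ hμ'
    _ = max (a₂ * ((μ 0).2 - (μ' 0).2) ^ 2) (a₂ * ((μ 1).2 - (μ' 1).2) ^ 2) :=
        mul_max_of_nonneg _ _ ha₂
    _ ≤ InstDiv a₁ a₂ μ' μ :=
        max_le (mul_sq_snd_sub_le_instDiv ha₁ 0) (mul_sq_snd_sub_le_instDiv ha₁ 1)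

lemma min_le_instDiv_of_altInstance (ha₁ : 0 ≤ a₁) (ha₂ : 0 ≤ a₂)
    (hf0 : τ < (μ 0).2) (hf1 : (μ 0).2 < (μ 1).2) (halt : AltInstance τ μ' μ) :
    min (a₂ * ((μ 1).2 - (μ 0).2) ^ 2 / 4) (a₂ * ((μ 0).2 - τ) ^ 2) ≤ InstDiv a₁ a₂ μ' μ := by
  have hμ := not_instFeasible_of_lt hf0 hf1
  obtain ⟨j', j, hj', hj, hdiff⟩ := halt
  obtain rfl : j = 0 := hj.unique (isOptArm_zero_of_lt hf0 hf1)
  by_cases hμ' : InstFeasible τ μ'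
  · refine min_le_of_right_le (mul_sq_le_instDiv_of_instFeasible ha₁ ha₂ hf0.le ?_ hμ')
    simp [Fin.forall_fin_two, hf1.le]
  · obtain rfl : j' = 1 := by
      rcases hdiff with hne | hiff
      · omega
      · exact absurd (iff_of_false hμ' hμ) hiff
    exact min_le_of_left_le (mul_sq_sub_div_four_le_instDiv ha₁ ha₂ hf1.le
      (hj'.lt_of_not_instFeasible hμ' 0 (by decide)).le)

lemma exists_altInstance_instDiv_eq_of_feasible (ha₂ : 0 ≤ a₂) (hf0 : τ < (μ 0).2)
    (hf1 : (μ 0).2 < (μ 1).2) :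
    ∃ μ', AltInstance τ μ' μ ∧ a₂ * ((μ 0).2 - τ) ^ 2 = InstDiv a₁ a₂ μ' μ := by
  let ν : Fin 2 → ℝ × ℝ := ![((μ 0).1, τ), μ 1]
  have hν : InstFeasible τ ν := ⟨0, le_rfl⟩
  refine ⟨ν, ⟨0, 0, Or.inl ⟨hν, le_rfl, ?_⟩, isOptArm_zero_of_lt hf0 hf1, ?_⟩, ?_⟩
  · intro i hi h
    obtain rfl : i = 1 := by omega
    simp only [ν, Matrix.cons_val_one, Matrix.cons_val_zero] at h
    linarith
  · exact Or.inr fun hiff => not_instFeasible_of_lt hf0 hf1 (hiff.1 hν)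
  · simp only [InstDiv, ν, Matrix.cons_val_zero, Matrix.cons_val_one, sub_self,
      zero_pow two_ne_zero, mul_zero, zero_add]
    exact (max_eq_left (by positivity)).symm

lemma exists_altInstance_instDiv_eq_of_swap (ha₂ : 0 ≤ a₂) (hf0 : τ < (μ 0).2)
    (hf1 : (μ 0).2 < (μ 1).2) {δ : ℝ} (hδ : 0 < δ) :
    ∃ μ', AltInstance τ μ' μ ∧ a₂ * (((μ 1).2 - (μ 0).2) / 2 + δ) ^ 2 = InstDiv a₁ a₂ μ' μ := by
  set m := ((μ 0).2 + (μ 1).2) / 2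
  let ν : Fin 2 → ℝ × ℝ := ![((μ 0).1, m + δ), ((μ 1).1, m)]
  have hν : ¬ InstFeasible τ ν := by
    simp only [not_instFeasible_iff, Fin.forall_fin_two, ν, m, Matrix.cons_val_zero,
      Matrix.cons_val_one]
    constructor <;> linarith
  refine ⟨ν, ⟨1, 0, Or.inr ⟨hν, ?_⟩, isOptArm_zero_of_lt hf0 hf1, Or.inl (by decide)⟩, ?_⟩
  · simp [Fin.forall_fin_two, ν, hδ]
  · have h0 : (μ 0).2 - (m + δ) = -(((μ 1).2 - (μ 0).2) / 2 + δ) := by ring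
    have h1 : (μ 1).2 - m = ((μ 1).2 - (μ 0).2) / 2 := by ring
    simp only [InstDiv, ν, Matrix.cons_val_zero, Matrix.cons_val_one, sub_self,
      zero_pow two_ne_zero, mul_zero, zero_add, h0, h1, neg_sq]
    refine (max_eq_left ?_).symm
    gcongr
    linarith

end TwoArm

/-- Lower-bound computation, Case 4: the instance is infeasible and arm `0` is optimal.
The infimum of the divergence over alternative instances equals
`min{a₂(μ₂(2) − μ₂(1))²/4, a₂(μ₂(1) − τ)²}`. -/
theorem two_arm_lb_infeasible_instance (a₁ a₂ τ : ℝ) (ha₁ : 0 < a₁) (ha₂ : 0 < a₂)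
    (μ : Fin 2 → ℝ × ℝ)
    (hf0 : τ < (μ 0).2) (hf1 : (μ 0).2 < (μ 1).2) :
    sInf { d : ℝ | ∃ μ' : Fin 2 → ℝ × ℝ, AltInstance τ μ' μ ∧ d = InstDiv a₁ a₂ μ' μ }
      = min (a₂ * ((μ 1).2 - (μ 0).2) ^ 2 / 4) (a₂ * ((μ 0).2 - τ) ^ 2) := by
  set S := { d : ℝ | ∃ μ' : Fin 2 → ℝ × ℝ, AltInstance τ μ' μ ∧ d = InstDiv a₁ a₂ μ' μ }
  have hS : BddBelow S := ⟨0, by rintro _ ⟨μ', -, rfl⟩; exact instDiv_nonneg ha₁.le ha₂.le⟩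
  have hfeas : a₂ * ((μ 0).2 - τ) ^ 2 ∈ S :=
    exists_altInstance_instDiv_eq_of_feasible ha₂.le hf0 hf1
  have hswap : Tendsto (fun δ => a₂ * (((μ 1).2 - (μ 0).2) / 2 + δ) ^ 2) (𝓝[>] 0)
      (𝓝 (a₂ * ((μ 1).2 - (μ 0).2) ^ 2 / 4)) := by
    convert ((by fun_prop : Continuous fun δ : ℝ => a₂ * (((μ 1).2 - (μ 0).2) / 2 + δ) ^ 2)
      |>.tendsto 0).mono_left nhdsWithin_le_nhds using 2
    ring
  refine le_antisymm (le_min ?_ (csInf_le hS hfeas)) (le_csInf ⟨_, hfeas⟩ ?_)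
  · exact csInf_le_of_tendsto hS hswap (eventually_nhdsWithin_of_forall fun δ hδ =>
      exists_altInstance_instDiv_eq_of_swap ha₂.le hf0 hf1 hδ)
  · rintro _ ⟨μ', halt, rfl⟩
    exact min_le_instDiv_of_altInstance ha₁.le ha₂.le hf0 hf1 halt
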